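/- arXiv:1402.3194 — 2 statements merged into one kernel-verified Lean document; each statement's English description precedes it below -/
import Mathlib

section
/- For all u ∈ ℝ⁶ and u₀ ∈ ℝ, the matrix S_x(u) is symmetric and the product S_x(u)·A_x(u) is symmetric, where S_x is the perturbed Hessian symmetrizer of the two-layer shallow water model. -/
open Matrix

noncomputable def Ax (g γ : ℝ) (u : Fin 6 → ℝ) : Matrix (Fin 6) (Fin 6) ℝ :=
  !![u 2, 0, u 0, 0, 0, 0;
     0, u 3, 0, u 1, 0, 0;
     g, g, u 2, 0, 0, 0;
     γ * g, g, 0, u 3, 0, 0;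
     0, 0, 0, 0, u 2, 0;
     0, 0, 0, 0, 0, u 3]

noncomputable def Sx (g γ u₀ : ℝ) (u : Fin 6 → ℝ) : Matrix (Fin 6) (Fin 6) ℝ :=
  !![g * γ, g * γ, γ * (u 2 - u₀), 0, 0, 0;
     g * γ, g, 0, u 3 - u₀, 0, 0;
     γ * (u 2 - u₀), 0, γ * u 0, 0, 0, 0;
     0, u 3 - u₀, 0, u 1, 0, 0;
     0, 0, 0, 0, γ * u 0, 0;
     0, 0, 0, 0, 0, u 1]

theorem Sx_isSymm (g γ u₀ : ℝ) (u : Fin 6 → ℝ) : (Sx g γ u₀ u).IsSymm :=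
  IsSymm.ext fun i j => by fin_cases i <;> fin_cases j <;> rfl

/-- Mirrored entries are written identically, so the symmetry of the product is checked by `rfl`. -/
theorem Sx_mul_Ax (g γ u₀ : ℝ) (u : Fin 6 → ℝ) :
    Sx g γ u₀ u * Ax g γ u =
      !![g * γ * (2 * u 2 - u₀), g * γ * (u 2 + u 3 - u₀), γ * (g * u 0 + u 2 * (u 2 - u₀)),
          g * γ * u 1, 0, 0;
        g * γ * (u 2 + u 3 - u₀), g * (2 * u 3 - u₀), g * γ * u 0, g * u 1 + u 3 * (u 3 - u₀),
          0, 0;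
        γ * (g * u 0 + u 2 * (u 2 - u₀)), g * γ * u 0, γ * u 0 * (2 * u 2 - u₀), 0, 0, 0;
        g * γ * u 1, g * u 1 + u 3 * (u 3 - u₀), 0, u 1 * (2 * u 3 - u₀), 0, 0;
        0, 0, 0, 0, γ * u 0 * u 2, 0;
        0, 0, 0, 0, 0, u 1 * u 3] := by
  ext i j
  fin_cases i <;> fin_cases j <;> simp [Sx, Ax, mul_apply, Fin.sum_univ_six] <;> ring

theorem Sx_mul_Ax_isSymm (g γ u₀ : ℝ) (u : Fin 6 → ℝ) : (Sx g γ u₀ u * Ax g γ u).IsSymm := by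
  rw [Sx_mul_Ax]
  exact IsSymm.ext fun i j => by fin_cases i <;> fin_cases j <;> rfl

theorem Sx_symmetrizer (g γ : ℝ) :
    ∀ (u : Fin 6 → ℝ) (u₀ : ℝ),
      (Sx g γ u₀ u).IsSymm ∧ (Sx g γ u₀ u * Ax g γ u).IsSymm :=
  fun u u₀ => ⟨Sx_isSymm g γ u₀ u, Sx_mul_Ax_isSymm g γ u₀ u⟩
end

section
/- The third leading principal minor of the Sturm–Sylvester matrix of the quartic P(λ) = (λ²−1)((λ−F_x)²−h) − γh equals m₃ = 8(1+h)F_x⁴ − 16(1 − h(6+γ) + h²)F_x² + 8(1+h)(1 − 2h(1−2γ) + h²). -/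
open Matrix

noncomputable def Mmat (Fx h γ : ℝ) : Matrix (Fin 4) (Fin 4) ℝ :=
  !![4, -6 * Fx, -2 * (1 + h - Fx^2), 2 * Fx;
     -6 * Fx, 2 * (1 + h + 5 * Fx^2), -2 * Fx * (1 - 2*h + 2*Fx^2), 4 * h * (γ - 1);
     -2 * (1 + h - Fx^2), -2 * Fx * (1 - 2*h + 2*Fx^2),
       2 * (1 + h^2 + 4*Fx^2 + Fx^4 + 2*h*(γ - Fx^2)), -2 * Fx * (1 + h*(3*γ - 2) + 2*Fx^2);
     2 * Fx, 4 * h * (γ - 1), -2 * Fx * (1 + h*(3*γ - 2) + 2*Fx^2),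
       Fx^4 + Fx^2 + h*(1 - 2*Fx^2 + γ*(Fx^2 - 1)) + 2*(h^2*(1 - γ))]

lemma submatrix_castLE_of_fin_four {R : Type*} (a b c d e f g h i j k l m n o p : R) :
    (!![a, b, c, d; e, f, g, h; i, j, k, l; m, n, o, p] : Matrix (Fin 4) (Fin 4) R).submatrix
        (Fin.castLE (by norm_num : 3 ≤ 4)) (Fin.castLE (by norm_num : 3 ≤ 4)) =
      !![a, b, c; e, f, g; i, j, k] := by
  ext r s
  fin_cases r <;> fin_cases s <;> rfl

theorem m3_formula (Fx h γ : ℝ) :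
    ((Mmat Fx h γ).submatrix (Fin.castLE (by norm_num : 3 ≤ 4))
        (Fin.castLE (by norm_num : 3 ≤ 4))).det =
      8 * (1 + h) * Fx^4 - 16 * (1 - h * (6 + γ) + h^2) * Fx^2 +
        8 * (1 + h) * (1 - 2 * h * (1 - 2 * γ) + h^2) := by
  rw [Mmat, submatrix_castLE_of_fin_four, det_fin_three]
  simp only [of_apply, cons_val', cons_val_zero, cons_val_one, cons_val, cons_val_fin_one,
    Fin.isValue]
  ring
end
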